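/- arXiv:1310.8249 — 2 statements merged into one kernel-verified Lean document; each statement's English description precedes it below -/
import Mathlib

section
/- Let P = x^3·y + x^2·p2(y) + x·p1(y) + p0(y) and Q = x^2·y + x·q1(y) + q0(y) with p0,p1,p2,q0,q1 ∈ K[y]. Then [P,Q] = x^4·y + μ0 + μ1·x + μ2·x^2 + μ3·x^3 holds for constants μ0,μ1,μ2,μ3 ∈ K if and only if the following system of differential equations holds: (1) μ3 = 3y·q1' − q1 + 2p2 − 2y·p2'; (2) μ2 = 3y·q0' + 2p2·q1' − p2'·q1 + p1 − 2y·p1'; (3) μ1 = 2p2·q0' + p1·q1' − p1'·q1 − 2y·p0'; (4) μ0 = p1·q0' − p0'·q1. -/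
open MvPolynomial Polynomial

/-!
Both sides of the equivalence are read off coefficientwise in `x`. Since `P` and `Q` are
polynomials in `x` with coefficients in `K[y]`, the bracket expands directly into
`x⁴y + c₀ + c₁x + c₂x² + c₃x³` with `cᵢ ∈ K[y]` given by the four right-hand sides; comparing
coefficients, via the embedding `K[x,y] ↪ K[y][x]`, turns the identity into `cᵢ = μᵢ`.
-/

/-- The Jacobian bracket on K[x,y]. -/
noncomputable def jbr {K : Type*} [CommRing K] (P Q : MvPolynomial (Fin 2) K) :
    MvPolynomial (Fin 2) K :=
  pderiv 0 P * pderiv 1 Q - pderiv 1 P * pderiv 0 Q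

/-- Embedding of K[y] into K[x,y]. -/
noncomputable def py {K : Type*} [CommRing K] (p : Polynomial K) : MvPolynomial (Fin 2) K :=
  Polynomial.aeval (MvPolynomial.X 1) p

section

variable {K : Type*} [CommRing K]

lemma py_C (a : K) : py (Polynomial.C a) = MvPolynomial.C a := by
  simp [py]

lemma pderiv_zero_py (p : K[X]) : pderiv 0 (py p) = 0 := by
  induction p using Polynomial.induction_on with
  | C a => simp [py]
  | add p q hp hq => simp_all [py]
  | monomial n a _ => simp [py]

lemma pderiv_one_py (p : K[X]) : pderiv 1 (py p) = py (derivative p) := by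
  induction p using Polynomial.induction_on with
  | C a => simp [py]
  | add p q hp hq => simp_all [py]
  | monomial n a _ => simp [py, derivative_mul]

lemma jbr_eq (p0 p1 p2 q0 q1 : K[X]) :
    jbr (X 0 ^ 3 * X 1 + X 0 ^ 2 * py p2 + X 0 * py p1 + py p0)
        (X 0 ^ 2 * X 1 + X 0 * py q1 + py q0) =
      X 0 ^ 4 * X 1
        + (py (p1 * derivative q0 - derivative p0 * q1)
          + py (2 * p2 * derivative q0 + p1 * derivative q1 - derivative p1 * q1
              - 2 * Polynomial.X * derivative p0) * X 0
          + py (3 * Polynomial.X * derivative q0 + 2 * p2 * derivative q1 - derivative p2 * q1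
              + p1 - 2 * Polynomial.X * derivative p1) * X 0 ^ 2
          + py (3 * Polynomial.X * derivative q1 - q1 + 2 * p2
              - 2 * Polynomial.X * derivative p2) * X 0 ^ 3) := by
  simp only [jbr, map_add, pderiv_mul, pderiv_pow, pderiv_zero_py, pderiv_one_py,
    pderiv_X_self, pderiv_X_of_ne (by decide : (1 : Fin 2) ≠ 0),
    pderiv_X_of_ne (by decide : (0 : Fin 2) ≠ 1)]
  simp only [py, map_add, map_mul, map_sub, map_ofNat, Polynomial.aeval_X]
  ring

variable (K) in
noncomputable def toPolyPoly : MvPolynomial (Fin 2) K →ₐ[K] K[X][X] :=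
  MvPolynomial.aeval ![Polynomial.X, Polynomial.C Polynomial.X]

lemma toPolyPoly_injective : Function.Injective (toPolyPoly K) := by
  let ofPolyPoly : K[X][X] →ₐ[K] MvPolynomial (Fin 2) K :=
    Polynomial.aevalTower (Polynomial.aeval (X 1)) (X 0)
  have hinv : ofPolyPoly.comp (toPolyPoly K) = AlgHom.id K _ := by
    ext i
    fin_cases i <;> simp [ofPolyPoly, toPolyPoly]
  exact Function.LeftInverse.injective (AlgHom.congr_fun hinv)

lemma toPolyPoly_X_zero : toPolyPoly K (X 0) = Polynomial.X := by
  simp [toPolyPoly]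

lemma toPolyPoly_py (p : K[X]) : toPolyPoly K (py p) = Polynomial.C p := by
  rw [py, ← Polynomial.aeval_algHom_apply]
  have hy : toPolyPoly K (X 1) = Polynomial.CAlgHom (R := K) Polynomial.X := by
    simp [toPolyPoly]
  rw [hy, Polynomial.aeval_algHom_apply, Polynomial.aeval_X_left_apply]
  rfl

lemma py_cubic_eq_py_cubic_iff (a0 a1 a2 a3 b0 b1 b2 b3 : K[X]) :
    py a0 + py a1 * X 0 + py a2 * X 0 ^ 2 + py a3 * X 0 ^ 3
        = py b0 + py b1 * X 0 + py b2 * X 0 ^ 2 + py b3 * X 0 ^ 3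
      ↔ a3 = b3 ∧ a2 = b2 ∧ a1 = b1 ∧ a0 = b0 := by
  refine ⟨fun h ↦ ?_, by rintro ⟨rfl, rfl, rfl, rfl⟩; rfl⟩
  replace h := congrArg (toPolyPoly K) h
  simp only [map_add, map_mul, map_pow, toPolyPoly_py, toPolyPoly_X_zero] at h
  refine ⟨?_, ?_, ?_, ?_⟩
  · simpa using congrArg (Polynomial.coeff · 3) h
  · simpa using congrArg (Polynomial.coeff · 2) h
  · simpa using congrArg (Polynomial.coeff · 1) h
  · simpa using congrArg (Polynomial.coeff · 0) h

end

theorem stmt3_general {K : Type*} [Field K]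
    (p0 p1 p2 q0 q1 : Polynomial K) (μ0 μ1 μ2 μ3 : K)
    (P Q : MvPolynomial (Fin 2) K)
    (hP : P = X 0 ^ 3 * X 1 + X 0 ^ 2 * py p2 + X 0 * py p1 + py p0)
    (hQ : Q = X 0 ^ 2 * X 1 + X 0 * py q1 + py q0) :
    jbr P Q = X 0 ^ 4 * X 1 + MvPolynomial.C μ0 + MvPolynomial.C μ1 * X 0
        + MvPolynomial.C μ2 * X 0 ^ 2 + MvPolynomial.C μ3 * X 0 ^ 3
      ↔ (Polynomial.C μ3
            = 3 * Polynomial.X * derivative q1 - q1 + 2 * p2 - 2 * Polynomial.X * derivative p2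
        ∧ Polynomial.C μ2
            = 3 * Polynomial.X * derivative q0 + 2 * p2 * derivative q1 - derivative p2 * q1
              + p1 - 2 * Polynomial.X * derivative p1
        ∧ Polynomial.C μ1
            = 2 * p2 * derivative q0 + p1 * derivative q1 - derivative p1 * q1
              - 2 * Polynomial.X * derivative p0
        ∧ Polynomial.C μ0 = p1 * derivative q0 - derivative p0 * q1) := by
  have hμ : X 0 ^ 4 * X 1 + MvPolynomial.C μ0 + MvPolynomial.C μ1 * X 0
        + MvPolynomial.C μ2 * X 0 ^ 2 + MvPolynomial.C μ3 * X 0 ^ 3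
      = X 0 ^ 4 * X 1 + (py (Polynomial.C μ0) + py (Polynomial.C μ1) * X 0
        + py (Polynomial.C μ2) * X 0 ^ 2 + py (Polynomial.C μ3) * X 0 ^ 3) := by
    simp only [py_C]
    ring
  rw [hP, hQ, jbr_eq, hμ, eq_comm, add_right_inj, py_cubic_eq_py_cubic_iff]

theorem stmt3 {K : Type*} [Field K] [CharZero K]
    (p0 p1 p2 q0 q1 : Polynomial K) (μ0 μ1 μ2 μ3 : K)
    (P Q : MvPolynomial (Fin 2) K)
    (hP : P = X 0 ^ 3 * X 1 + X 0 ^ 2 * py p2 + X 0 * py p1 + py p0)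
    (hQ : Q = X 0 ^ 2 * X 1 + X 0 * py q1 + py q0) :
    jbr P Q = X 0 ^ 4 * X 1 + MvPolynomial.C μ0 + MvPolynomial.C μ1 * X 0
        + MvPolynomial.C μ2 * X 0 ^ 2 + MvPolynomial.C μ3 * X 0 ^ 3
      ↔ (Polynomial.C μ3
            = 3 * Polynomial.X * derivative q1 - q1 + 2 * p2 - 2 * Polynomial.X * derivative p2
        ∧ Polynomial.C μ2
            = 3 * Polynomial.X * derivative q0 + 2 * p2 * derivative q1 - derivative p2 * q1
              + p1 - 2 * Polynomial.X * derivative p1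
        ∧ Polynomial.C μ1
            = 2 * p2 * derivative q0 + p1 * derivative q1 - derivative p1 * q1
              - 2 * Polynomial.X * derivative p0
        ∧ Polynomial.C μ0 = p1 * derivative q0 - derivative p0 * q1) :=
  stmt3_general p0 p1 p2 q0 q1 μ0 μ1 μ2 μ3 P Q hP hQ
end

section
/- Let μ3 ∈ K and let q1, p2 ∈ K[y] satisfy q1(0) = μ3, q1'(0) = 0, p2(0) = μ3, p2'(0) = 0, and μ3 = 3y·q1' − q1 + 2p2 − 2y·p2'. Then there exists F ∈ K[y] with F(0) = 0 such that q1 = μ3 + y^2·F' and p2 = μ3 + y·F + (3/2)·y^2·F'. -/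
/-!
With `D := 2 p₂ - 3 q₁ + μ₃` the identity reads `2 q₁ - 2 μ₃ = y D' - D`. Since `D(0) = 0` we may
write `D = y G`, and then `y D' - D = y² G'`.
Hence `F := G / 2` works; `F(0) = D'(0) / 2 = 0` because `q₁'(0) = p₂'(0) = 0`.
-/

open Polynomial

namespace Polynomial

theorem X_mul_derivative_X_mul_sub {R : Type*} [CommRing R] (p : R[X]) :
    X * derivative (X * p) - X * p = X ^ 2 * derivative p := by
  rw [derivative_mul, derivative_X]
  ring

theorem eval_zero_derivative_X_mul {R : Type*} [CommSemiring R] (p : R[X]) :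
    (derivative (X * p)).eval 0 = p.eval 0 := by
  simp [derivative_mul]

end Polynomial

theorem stmt4 {K : Type*} [Field K] [CharZero K] (μ3 : K) (q1 p2 : Polynomial K)
    (hq10 : q1.eval 0 = μ3) (hq1'0 : (derivative q1).eval 0 = 0)
    (hp20 : p2.eval 0 = μ3) (hp2'0 : (derivative p2).eval 0 = 0)
    (heq : C μ3 = 3 * X * derivative q1 - q1 + 2 * p2 - 2 * X * derivative p2) :
    ∃ F : Polynomial K, F.eval 0 = 0
      ∧ q1 = C μ3 + X ^ 2 * derivative F
      ∧ p2 = C μ3 + X * F + C ((3 : K) / 2) * X ^ 2 * derivative F := by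
  set D := 2 * p2 - 3 * q1 + C μ3
  have hD' : derivative D = 2 * derivative p2 - 3 * derivative q1 := by
    simp [D]
  obtain ⟨G, hG⟩ : X ∣ D := by
    rw [X_dvd_iff, coeff_zero_eq_eval_zero]
    simp only [D, eval_add, eval_sub, eval_mul, eval_ofNat, eval_C, hp20, hq10]
    ring
  have hG0 : G.eval 0 = 0 := by
    rw [← eval_zero_derivative_X_mul, ← hG, hD']
    simp [hp2'0, hq1'0]
  have hq1 : 2 * q1 = 2 * C μ3 + X ^ 2 * derivative G := by
    rw [← X_mul_derivative_X_mul_sub, ← hG, hD']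
    linear_combination -heq
  have half : C (2⁻¹ : K) * 2 = 1 := by
    rw [← C_ofNat, ← C_mul, inv_mul_cancel₀ two_ne_zero, C_1]
  have three_halves : C ((3 : K) / 2) = 3 * C 2⁻¹ := by
    rw [div_eq_mul_inv, C_mul, C_ofNat]
  refine ⟨C 2⁻¹ * G, by simp [hG0], ?_, ?_⟩
  · rw [derivative_C_mul]
    linear_combination C 2⁻¹ * hq1 - (q1 - C μ3) * half
  · rw [derivative_C_mul, three_halves]
    linear_combination C 2⁻¹ * hG + 3 * C 2⁻¹ ^ 2 * hq1
      - (p2 - C μ3 + 3 * C 2⁻¹ * (q1 - C μ3)) * half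
end
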